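/- In the Grigorchuk group 𝔾 = ⟨a,b,c,d⟩, define t_0 = abab. Then t_0^2 ≠ 1, and for every m ≥ 0 there exists t_m ∈ 𝔾 of the form t_m = ∏_{i=1}^{2^m} (a b a x_i) with each x_i ∈ {b,c,d}, such that t_m^2 is a nontrivial element of the rigid stabilizer Rist(1^m) ∩ 𝔾 and t_m restricted to the subtree at 1^m equals t_0; in particular, Rist_𝔾(1^m) contains a nontrivial element of word length at most 2^{m+4} with respect to (a,b,c). -/

import Mathlib

/-- The automorphism `a` of the rooted binary tree `{0,1}*` flipping the first bit. -/
def aFun : List Bool → List Bool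
  | [] => []
  | x :: s => (!x) :: s

lemma aFun_invol : Function.Involutive aFun := by
  intro s; cases s <;> simp [aFun]

def aPerm : Equiv.Perm (List Bool) := aFun_invol.toPerm

/-- The alphabet `{b, c, d}` of defining strings of generalized Grigorchuk groups. -/
inductive GLetter : Type
  | b | c | d
deriving DecidableEq

/-- The action of the generator `x_n` of `𝔾_ω`: it fixes `1^m` and sends
`1^m 0 s` to itself if `ω_{n+m} = x`, and to `1^m 0 a(s)` otherwise. -/
def xFun (ω : ℕ → GLetter) (x : GLetter) : ℕ → List Bool → List Bool
  | _, [] => []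
  | n, true :: s => true :: xFun ω x (n + 1) s
  | n, false :: s => false :: (if ω n = x then s else aFun s)

lemma xFun_invol (ω : ℕ → GLetter) (x : GLetter) (n : ℕ) :
    Function.Involutive (xFun ω x n) := by
  intro s
  induction s generalizing n with
  | nil => rfl
  | cons hd t ih =>
    cases hd
    · by_cases h : ω n = x <;> simp [xFun, h, aFun_invol t]
    · simp [xFun, ih]

def xPerm (ω : ℕ → GLetter) (x : GLetter) (n : ℕ) : Equiv.Perm (List Bool) :=
  (xFun_invol ω x n).toPerm

/-- The generalized Grigorchuk group `𝔾_ω = ⟨a, b₀, c₀, d₀⟩`. -/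
def Grig (ω : ℕ → GLetter) : Subgroup (Equiv.Perm (List Bool)) :=
  Subgroup.closure {aPerm, xPerm ω GLetter.b 0, xPerm ω GLetter.c 0, xPerm ω GLetter.d 0}

/-- The defining string `ω = dcbdcbdcb…` of the (first) Grigorchuk group. -/
def grigω : ℕ → GLetter := fun n =>
  if n % 3 = 0 then GLetter.d else if n % 3 = 1 then GLetter.c else GLetter.b

/-- The generators `a, b, c, d` of the Grigorchuk group `𝔾`. -/
def ga : Equiv.Perm (List Bool) := aPerm
def gb : Equiv.Perm (List Bool) := xPerm grigω GLetter.b 0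
def gc : Equiv.Perm (List Bool) := xPerm grigω GLetter.c 0
def gd : Equiv.Perm (List Bool) := xPerm grigω GLetter.d 0

/-!
Write `(g₀, g₁)` for the automorphism acting as `gᵢ` below the vertex `i`. Since
`b = (a, c)`, `c = (a, d)`, `d = (1, b)` and `a` swaps the two subtrees, the blocks satisfy
`(aba·d)(aba·x') = (a^ε, aba·x)`, where `x ↦ x'` is the substitution `b ↦ d, c ↦ b, d ↦ c`.
Replacing every block `aba·x` of `t_m` by the two blocks `aba·d, aba·x'` therefore gives
`t_{m+1} = (a^k, t_m)`, and as `a² = 1`, `t_{m+1}² = (1, t_m²)`. By induction `t_m²` lies in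
`Rist(1^m)` and `t_m` acts as `t₀` below `1^m`; finally `t₀² = (ab)⁴` moves the vertex `111`,
and each block has length at most `5` in `a, b, c` because `d = bc`.
-/

open Equiv

def treePairFun (f₀ f₁ : List Bool → List Bool) : List Bool → List Bool
  | [] => []
  | false :: s => false :: f₀ s
  | true :: s => true :: f₁ s

/-- `treePair (g₀, g₁)` is the automorphism written `(g₀, g₁)` in the recursive notation:
it fixes both vertices of the first level (`false` is `0`, `true` is `1`) and acts by `gᵢ`
below vertex `i`. -/
def treePair : Perm (List Bool) × Perm (List Bool) →* Perm (List Bool) where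
  toFun g :=
    { toFun := treePairFun g.1 g.2
      invFun := treePairFun g.1.symm g.2.symm
      left_inv := by rintro (_ | ⟨_ | _, s⟩) <;> simp [treePairFun]
      right_inv := by rintro (_ | ⟨_ | _, s⟩) <;> simp [treePairFun] }
  map_one' := by ext1 s; rcases s with _ | ⟨_ | _, s⟩ <;> rfl
  map_mul' g h := by ext1 s; rcases s with _ | ⟨_ | _, s⟩ <;> rfl

@[simp]
lemma treePair_apply_false (g : Perm (List Bool) × Perm (List Bool)) (s : List Bool) :
    treePair g (false :: s) = false :: g.1 s := rfl

@[simp]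
lemma treePair_apply_true (g : Perm (List Bool) × Perm (List Bool)) (s : List Bool) :
    treePair g (true :: s) = true :: g.2 s := rfl

lemma aPerm_mul_treePair_mul_aPerm (g₀ g₁ : Perm (List Bool)) :
    aPerm * treePair (g₀, g₁) * aPerm = treePair (g₁, g₀) := by
  ext1 s
  rcases s with _ | ⟨_ | _, s⟩ <;> rfl

lemma aPerm_sq : aPerm ^ 2 = 1 := by
  ext1 s
  exact aFun_invol s

lemma aPerm_pow_sq (k : ℕ) : (aPerm ^ k) ^ 2 = 1 := by
  rw [← pow_mul, mul_comm, pow_mul, aPerm_sq, one_pow]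

def rist (v : List Bool) : Subgroup (Perm (List Bool)) where
  carrier := {g | ∀ u, ¬ v <+: u → g u = u}
  one_mem' _ _ := rfl
  mul_mem' hg hh u hu := by rw [Perm.mul_apply, hh u hu, hg u hu]
  inv_mem' hg u hu := by rw [Perm.inv_eq_iff_eq, hg u hu]

lemma treePair_one_mem_rist_cons {g : Perm (List Bool)} {v : List Bool} (hg : g ∈ rist v) :
    treePair (1, g) ∈ rist (true :: v) := by
  rintro (_ | ⟨_ | _, s⟩) hs
  · rfl
  · rfl
  · rw [treePair_apply_true, hg s fun h => hs (List.cons_prefix_cons.mpr ⟨rfl, h⟩)]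

lemma xPerm_eq_treePair (ω : ℕ → GLetter) (x : GLetter) (n : ℕ) :
    xPerm ω x n = treePair (if ω n = x then 1 else aPerm, xPerm ω x (n + 1)) := by
  ext1 s
  rcases s with _ | ⟨_ | _, s⟩
  · rfl
  · by_cases h : ω n = x <;> simp [xPerm, xFun, h, aPerm]
  · rfl

lemma xPerm_eq_of_iff {ω ω' : ℕ → GLetter} {x x' : GLetter} {n n' : ℕ}
    (h : ∀ k, ω (n + k) = x ↔ ω' (n' + k) = x') : xPerm ω x n = xPerm ω' x' n' := by
  ext1 s
  induction s generalizing n n' with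
  | nil => rfl
  | cons hd s ih =>
    cases hd
    · simp [xPerm, xFun, show ω n = x ↔ ω' n' = x' from h 0]
    · simp only [xPerm, Function.Involutive.coe_toPerm, xFun] at ih ⊢
      rw [@ih (n + 1) (n' + 1) fun k => by
        simpa only [Nat.add_assoc, Nat.add_comm 1 k] using h (k + 1)]

lemma xPerm_b_mul_xPerm_c (ω : ℕ → GLetter) (n : ℕ) :
    xPerm ω GLetter.b n * xPerm ω GLetter.c n = xPerm ω GLetter.d n := by
  ext1 s
  induction s generalizing n with
  | nil => rfl
  | cons hd s ih =>
    cases hd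
    · cases h : ω n <;> simp [xPerm, xFun, h, aFun_invol s]
    · simpa [xPerm, xFun] using ih (n + 1)

namespace GLetter

/-- The letter that `x` becomes one level down: `b = (a, c)`, `c = (a, d)`, `d = (1, b)`. -/
def next : GLetter → GLetter
  | b => c | c => d | d => b

/-- The substitution `b ↦ d, c ↦ b, d ↦ c` of the recursion. -/
def prev : GLetter → GLetter
  | b => d | c => b | d => c

@[simp]
lemma next_prev (y : GLetter) : y.prev.next = y := by cases y <;> rfl

end GLetter

open GLetter

lemma grigω_succ_eq_iff (n : ℕ) (x : GLetter) : grigω (n + 1) = x ↔ grigω n = x.next := by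
  have h : n % 3 = 0 ∨ n % 3 = 1 ∨ n % 3 = 2 := by omega
  have h1 : (n + 1) % 3 = (n % 3 + 1) % 3 := by omega
  rcases h with h | h | h <;> simp only [grigω, h1, h] <;> cases x <;> simp [next]

def grigGen (y : GLetter) : Perm (List Bool) := xPerm grigω y 0

lemma grigGen_eq_treePair (y : GLetter) :
    grigGen y = treePair (if y = d then 1 else aPerm, grigGen y.next) := by
  rw [grigGen, xPerm_eq_treePair, xPerm_eq_of_iff (x' := y.next) (n' := 0)]
  · simp only [eq_comm (a := y)]
    rfl
  · intro k
    simp only [Nat.zero_add, Nat.add_comm 1 k, grigω_succ_eq_iff]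

lemma grigGen_mul_self (y : GLetter) : grigGen y * grigGen y = 1 :=
  Perm.ext (xFun_invol grigω y 0)

lemma grigGen_b_mul_c : grigGen b * grigGen c = grigGen d := xPerm_b_mul_xPerm_c grigω 0

def blockPerm (y : GLetter) : Perm (List Bool) := ga * gb * ga * grigGen y

lemma blockPerm_eq_treePair (y : GLetter) :
    blockPerm y = treePair (grigGen c * if y = d then 1 else aPerm, aPerm * grigGen y.next) := by
  rw [blockPerm, gb, ga, ← grigGen, grigGen_eq_treePair b, aPerm_mul_treePair_mul_aPerm,
    grigGen_eq_treePair y, ← map_mul]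
  rfl

lemma blockPerm_d_mul_blockPerm_prev (y : GLetter) :
    blockPerm d * blockPerm y.prev = treePair (aPerm ^ (if y = b then 0 else 1), blockPerm y) := by
  rw [blockPerm_eq_treePair, blockPerm_eq_treePair, ← map_mul, Prod.mk_mul_mk, next_prev]
  congr 2
  cases y <;> simp [prev, ← mul_assoc, grigGen_mul_self]

def letters : ℕ → List GLetter
  | 0 => [b]
  | m + 1 => (letters m).flatMap fun y => [d, y.prev]

lemma length_letters (m : ℕ) : (letters m).length = 2 ^ m := by
  induction m with
  | zero => rfl
  | succ m ih => simp [letters, ih, pow_succ]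

def tPerm (m : ℕ) : Perm (List Bool) := ((letters m).map blockPerm).prod

lemma tPerm_zero : tPerm 0 = ga * gb * ga * gb := by
  simp [tPerm, letters, blockPerm, grigGen, gb]

lemma prod_flatMap_blockPerm (L : List GLetter) :
    ∃ k, ((L.flatMap fun y => [d, y.prev]).map blockPerm).prod =
      treePair (aPerm ^ k, (L.map blockPerm).prod) := by
  induction L with
  | nil => exact ⟨0, by rw [pow_zero]; exact (map_one treePair).symm⟩
  | cons y L ih =>
    obtain ⟨k, hk⟩ := ih
    refine ⟨(if y = b then 0 else 1) + k, ?_⟩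
    simp only [List.flatMap_cons, List.map_append, List.prod_append, hk, List.map_cons,
      List.map_nil, List.prod_cons, List.prod_nil, mul_one,
      blockPerm_d_mul_blockPerm_prev, ← map_mul, Prod.mk_mul_mk, pow_add]

lemma exists_tPerm_succ_eq_treePair (m : ℕ) :
    ∃ k, tPerm (m + 1) = treePair (aPerm ^ k, tPerm m) :=
  prod_flatMap_blockPerm (letters m)

lemma tPerm_succ_sq (m : ℕ) : tPerm (m + 1) ^ 2 = treePair (1, tPerm m ^ 2) := by
  obtain ⟨k, hk⟩ := exists_tPerm_succ_eq_treePair m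
  rw [hk, ← map_pow, Prod.pow_mk, aPerm_pow_sq]

lemma tPerm_sq_mem_rist (m : ℕ) : tPerm m ^ 2 ∈ rist (List.replicate m true) := by
  induction m with
  | zero => exact fun u hu => absurd u.nil_prefix hu
  | succ m ih =>
    rw [tPerm_succ_sq, List.replicate_succ]
    exact treePair_one_mem_rist_cons ih

lemma tPerm_apply_replicate_append (m : ℕ) (s : List Bool) :
    tPerm m (List.replicate m true ++ s) = List.replicate m true ++ tPerm 0 s := by
  induction m with
  | zero => rfl
  | succ m ih =>
    obtain ⟨k, hk⟩ := exists_tPerm_succ_eq_treePair m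
    rw [hk, List.replicate_succ, List.cons_append, treePair_apply_true, ih]
    rfl

lemma tPerm_sq_ne_one (m : ℕ) : tPerm m ^ 2 ≠ 1 := by
  have h₀ : (tPerm 0 ^ 2) [true, true, true] ≠ [true, true, true] := by
    rw [tPerm_zero]
    decide
  intro h
  apply h₀
  simpa [sq, tPerm_apply_replicate_append] using
    congrArg (· (List.replicate m true ++ [true, true, true])) h

section WordLength

variable {M : Type*} [Monoid M] (S : Set M)

def IsProdOfAtMost (n : ℕ) (g : M) : Prop :=
  ∃ w : List M, w.length ≤ n ∧ (∀ x ∈ w, x ∈ S) ∧ w.prod = g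

variable {S}

lemma IsProdOfAtMost.mul {n n' : ℕ} {g g' : M} (h : IsProdOfAtMost S n g)
    (h' : IsProdOfAtMost S n' g') : IsProdOfAtMost S (n + n') (g * g') := by
  obtain ⟨w, hw, hwS, rfl⟩ := h
  obtain ⟨w', hw', hwS', rfl⟩ := h'
  refine ⟨w ++ w', by simp only [List.length_append]; omega, ?_, List.prod_append⟩
  simpa only [List.mem_append, or_imp, forall_and] using And.intro hwS hwS'

lemma isProdOfAtMost_list_prod {n : ℕ} (L : List M) (h : ∀ g ∈ L, IsProdOfAtMost S n g) :
    IsProdOfAtMost S (n * L.length) L.prod := by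
  induction L with
  | nil => exact ⟨[], le_rfl, by simp, rfl⟩
  | cons g L ih =>
    rw [List.length_cons, Nat.mul_succ, Nat.add_comm, List.prod_cons]
    exact (h g List.mem_cons_self).mul (ih fun g' hg' => h g' (List.mem_cons_of_mem g hg'))

end WordLength

lemma isProdOfAtMost_blockPerm (y : GLetter) : IsProdOfAtMost {ga, gb, gc} 5 (blockPerm y) := by
  cases y
  · exact ⟨[ga, gb, ga, gb], by simp, by simp, by simp [blockPerm, grigGen, gb, mul_assoc]⟩
  · exact ⟨[ga, gb, ga, gc], by simp, by simp, by simp [blockPerm, grigGen, gc, mul_assoc]⟩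
  · refine ⟨[ga, gb, ga, gb, gc], le_rfl, by simp, ?_⟩
    simp only [blockPerm, ← grigGen_b_mul_c, List.prod_cons, List.prod_nil, mul_one, mul_assoc]
    rfl

lemma isProdOfAtMost_tPerm_sq (m : ℕ) :
    IsProdOfAtMost {ga, gb, gc} (5 * 2 ^ m + 5 * 2 ^ m) (tPerm m ^ 2) := by
  have h : IsProdOfAtMost {ga, gb, gc} (5 * 2 ^ m) (tPerm m) := by
    have := isProdOfAtMost_list_prod ((letters m).map blockPerm) (by
      simp only [List.mem_map]
      rintro _ ⟨y, -, rfl⟩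
      exact isProdOfAtMost_blockPerm y)
    rwa [List.length_map, length_letters] at this
  exact sq (tPerm m) ▸ h.mul h

lemma grigGen_eq_gb_or_gc_or_gd (y : GLetter) :
    grigGen y = gb ∨ grigGen y = gc ∨ grigGen y = gd := by
  cases y <;> simp [grigGen, gb, gc, gd]

/-- In the Grigorchuk group, `t₀ = abab` has `t₀² ≠ 1`, and for every `m` there is
`t_m = ∏_{i=1}^{2^m} (a b a x_i)` with `x_i ∈ {b,c,d}` such that `t_m²` is a
nontrivial element of `Rist(1^m) ∩ 𝔾`, `t_m` restricted to the subtree at `1^m`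
is `t₀`, and `t_m²` has word length at most `2^{m+4}` in the generators `(a,b,c)`. -/
theorem stmt19 :
    (ga * gb * ga * gb) ^ 2 ≠ 1 ∧
    ∀ m : ℕ, ∃ x : Fin (2 ^ m) → Equiv.Perm (List Bool),
      (∀ i, x i = gb ∨ x i = gc ∨ x i = gd) ∧
      ∃ tm : Equiv.Perm (List Bool),
        tm = (List.ofFn fun i : Fin (2 ^ m) => ga * gb * ga * x i).prod ∧
        tm ^ 2 ≠ 1 ∧
        (∀ u : List Bool, ¬ (List.replicate m true <+: u) → (tm ^ 2) u = u) ∧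
        (∀ s : List Bool,
          tm (List.replicate m true ++ s) =
            List.replicate m true ++ (ga * gb * ga * gb) s) ∧
        ∃ l : List (Equiv.Perm (List Bool)), l.length ≤ 2 ^ (m + 4) ∧
          (∀ g ∈ l, g ∈ ({ga, gb, gc} : Set (Equiv.Perm (List Bool)))) ∧
          l.prod = tm ^ 2 := by
  refine ⟨tPerm_zero ▸ tPerm_sq_ne_one 0, fun m => ?_⟩
  have hlen : (letters m).length = 2 ^ m := length_letters m
  obtain ⟨w, hw, hwS, hwprod⟩ := isProdOfAtMost_tPerm_sq m
  refine ⟨fun i => grigGen (letters m)[(i : ℕ)], fun i => grigGen_eq_gb_or_gc_or_gd _, tPerm m,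
    ?_, tPerm_sq_ne_one m, tPerm_sq_mem_rist m, fun s => ?_, w, ?_, hwS, hwprod⟩
  · change _ = (List.ofFn fun i : Fin (2 ^ m) => blockPerm (letters m)[(i : ℕ)]).prod
    rw [List.ofFn_congr hlen.symm]
    simp only [Fin.val_cast, List.ofFn_getElem_eq_map]
    rfl
  · rw [tPerm_apply_replicate_append, tPerm_zero]
  · rw [pow_add]
    omega
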